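/- arXiv:2106.00701 — 4 statements merged into one kernel-verified Lean document; each statement's English description precedes it below -/
import Mathlib

section
/- Let Γ be a digraph of order n ≥ 2 with Laplacian L, and let Q be a restrictor matrix of order n. If Γ is polygonal, i.e. W_r(L) equals the convex hull (over ℝ) of the spectrum of QᴴLQ, then the algebraic connectivity α(Γ) equals 0 if and only if 0 is an eigenvalue of QᴴLQ, equivalently if and only if the multiplicity of 0 as a root of the characteristic polynomial of L is at least 2. -/
open Matrix

/-- A 0/1 adjacency matrix with zero diagonal. -/
def IsAdj {m : Type*} [Fintype m] (A : Matrix m m ℝ) : Prop :=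
  (∀ i j, A i j = 0 ∨ A i j = 1) ∧ ∀ i, A i i = 0

/-- Laplacian of a digraph: `L i i = d⁺(i)` and `L i j = -A i j` for `i ≠ j`. -/
noncomputable def lap {m : Type*} [Fintype m] [DecidableEq m] (A : Matrix m m ℝ) :
    Matrix m m ℝ :=
  Matrix.diagonal (fun i => ∑ j, A i j) - A

/-- Complexified Laplacian. -/
noncomputable def lapC {m : Type*} [Fintype m] [DecidableEq m] (A : Matrix m m ℝ) :
    Matrix m m ℂ :=
  (lap A).map (fun x => (x : ℂ))

/-- Restricted numerical range `W_r(M) = { xᴴ M x : ‖x‖ = 1, xᴴ e = 0 }`. -/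
noncomputable def rnr {m : Type*} [Fintype m] (M : Matrix m m ℂ) : Set ℂ :=
  { z | ∃ x : EuclideanSpace ℂ m, ‖x‖ = 1 ∧ star (x : m → ℂ) ⬝ᵥ (fun _ => (1 : ℂ)) = 0 ∧
      z = star (x : m → ℂ) ⬝ᵥ M.mulVec (x : m → ℂ) }

/-- Restrictor matrix: orthonormal columns, all orthogonal to the all-ones vector. -/
def IsRestrictor {m k : Type*} [Fintype m] [Fintype k] [DecidableEq k]
    (Q : Matrix m k ℂ) : Prop :=
  Qᴴ * Q = 1 ∧ Qᴴ *ᵥ (fun _ => (1 : ℂ)) = 0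

/-- Normal matrix: `Mᴴ M = M Mᴴ` (for real matrices, `Mᵀ M = M Mᵀ`). -/
def IsNormalM {m R : Type*} [Fintype m] [Mul (Matrix m m R)] [Star (Matrix m m R)]
    (M : Matrix m m R) : Prop := star M * M = M * star M

/-- Balanced digraph: `d⁺(i) = d⁻(i)` for every vertex. -/
def Bal {m : Type*} [Fintype m] (A : Matrix m m ℝ) : Prop :=
  ∀ i, ∑ j, A i j = ∑ j, A j i

/-- Algebraic connectivity `α(Γ) = min { xᵀ L x : x ∈ ℝⁿ, ‖x‖ = 1, xᵀ e = 0 }`. -/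
noncomputable def algConn {m : Type*} [Fintype m] (L : Matrix m m ℝ) : ℝ :=
  sInf { r | ∃ x : EuclideanSpace ℝ m, ‖x‖ = 1 ∧ (x : m → ℝ) ⬝ᵥ (fun _ => (1 : ℝ)) = 0 ∧
      r = (x : m → ℝ) ⬝ᵥ L.mulVec (x : m → ℝ) }

open Polynomial

/-!
Since `L e = 0`, conjugating `L` by `[e | Q]` (whose inverse is `[eᵀ/n ; Qᴴ]`) gives a block
upper-triangular matrix with diagonal blocks `0` (of size `1`) and `QᴴLQ`, so
`charpoly L = X * charpoly (QᴴLQ)`. Hence the spectrum of `QᴴLQ` lies in that of `L`, which by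
Gershgorin's theorem lies in `{0} ∪ {Re z > 0}`. Splitting `x ∈ ℂⁿ` into real and imaginary parts
shows that `α(Γ)` is the infimum of `Re` over `W_r(L)`; when `W_r(L)` is the convex hull of the
spectrum of `QᴴLQ`, this infimum is `Re μ` for an eigenvalue `μ` of `QᴴLQ` of least real part, and
`Re μ = 0` exactly when `μ = 0`.
-/

theorem IsRestrictor.vecMul_one {m k : Type*} [Fintype m] [Fintype k] [DecidableEq k]
    {Q : Matrix m k ℂ} (hQ : IsRestrictor Q) : (fun _ => (1 : ℂ)) ᵥ* Q = 0 := by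
  have h := congrArg star hQ.2
  rwa [star_mulVec, conjTranspose_conjTranspose, star_zero,
    show star (fun _ : m => (1 : ℂ)) = fun _ => 1 from star_one (m → ℂ)] at h

theorem IsRestrictor.charpoly_eq_X_mul_charpoly {m k : Type*} [Fintype m] [DecidableEq m]
    [Fintype k] [DecidableEq k] {L : Matrix m m ℂ} (hL : L *ᵥ (fun _ => 1) = 0)
    {Q : Matrix m k ℂ} (hQ : IsRestrictor Q) (hcard : Fintype.card k + 1 = Fintype.card m) :
    L.charpoly = X * (Qᴴ * L * Q).charpoly := by
  set c : Matrix m Unit ℂ := replicateCol Unit (fun _ => 1)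
  set r : Matrix Unit m ℂ := (Fintype.card m : ℂ)⁻¹ • replicateRow Unit (fun _ => 1)
  have hrc : r * c = 1 := by
    ext
    have : (Fintype.card m : ℂ) ≠ 0 := Nat.cast_ne_zero.2 (by omega)
    simp [r, c, mul_apply, this]
  have hrQ : r * Q = 0 := by
    ext _ j
    have hsum : ∑ i, Q i j = 0 := by simpa [vecMul, dotProduct] using congrFun hQ.vecMul_one j
    simp [r, mul_apply, ← Finset.mul_sum, hsum]
  have hQc : Qᴴ * c = 0 := by
    ext i _
    simpa [c, mul_apply, mulVec, dotProduct] using congrFun hQ.2 i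
  have hLc : L * c = 0 := by
    ext i _
    simpa [c, mul_apply, mulVec, dotProduct] using congrFun hL i
  have hcard' : Fintype.card (Unit ⊕ k) = Fintype.card m := by simp [← hcard, add_comm]
  have hVW : fromRows r Qᴴ * fromCols c Q = 1 := by
    rw [fromRows_mul_fromCols, hrc, hrQ, hQc, hQ.1, fromBlocks_one]
  have hWV : fromCols c Q * fromRows r Qᴴ = 1 := (mul_eq_one_comm_of_card_eq _ _ _ hcard').mp hVW
  calc L.charpoly = (L * fromCols c Q * fromRows r Qᴴ).charpoly := by
        rw [Matrix.mul_assoc, hWV, Matrix.mul_one]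
    _ = (fromRows r Qᴴ * (L * fromCols c Q)).charpoly := by
        rw [charpoly_mul_comm_of_le _ _ hcard'.ge, hcard', Nat.sub_self, pow_zero, one_mul]
    _ = (fromBlocks 0 (r * L * Q) 0 (Qᴴ * L * Q)).charpoly := by
        rw [mul_fromCols, hLc, fromRows_mul_fromCols, Matrix.mul_zero, Matrix.mul_zero,
          Matrix.mul_assoc, Matrix.mul_assoc]
    _ = X * (Qᴴ * L * Q).charpoly := by
        rw [charpoly_fromBlocks_zero₂₁, charpoly_zero, Fintype.card_unit, pow_one]

theorem IsAdj.nonneg {m : Type*} [Fintype m] {A : Matrix m m ℝ} (hA : IsAdj A) (i j : m) :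
    0 ≤ A i j := by
  rcases hA.1 i j with h | h <;> simp [h]

theorem eq_zero_or_re_pos_of_mem_closedBall {r : ℝ} {z : ℂ}
    (hz : z ∈ Metric.closedBall (r : ℂ) r) : z = 0 ∨ 0 < z.re := by
  rw [Metric.mem_closedBall, Complex.dist_eq] at hz
  have hr : 0 ≤ r := (norm_nonneg _).trans hz
  have hsq : (z.re - r) ^ 2 + z.im ^ 2 ≤ r ^ 2 := by
    have := pow_le_pow_left₀ (norm_nonneg _) hz 2
    rwa [Complex.sq_norm, Complex.normSq_apply, Complex.sub_re, Complex.sub_im,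
      Complex.ofReal_re, Complex.ofReal_im, sub_zero, ← sq, ← sq] at this
  rcases lt_or_ge 0 z.re with h | h
  · exact Or.inr h
  · left
    have hre : z.re = 0 := by nlinarith [sq_nonneg z.im]
    have him : z.im = 0 := by nlinarith [sq_nonneg z.im]
    exact Complex.ext (by simpa using hre) (by simpa using him)

theorem lap_mulVec_one {m : Type*} [Fintype m] [DecidableEq m] (A : Matrix m m ℝ) :
    lap A *ᵥ (fun _ => 1) = 0 := by
  ext i
  simp only [lap, sub_mulVec, Pi.sub_apply, mulVec_diagonal, mul_one, Pi.zero_apply]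
  simp [mulVec, dotProduct]

theorem lapC_mulVec_one {m : Type*} [Fintype m] [DecidableEq m] (A : Matrix m m ℝ) :
    lapC A *ᵥ (fun _ => 1) = 0 := by
  ext i
  simpa [lapC, mulVec, dotProduct] using congrArg ((↑) : ℝ → ℂ) (congrFun (lap_mulVec_one A) i)

theorem eq_zero_or_re_pos_of_mem_spectrum_lapC {m : Type*} [Fintype m] [DecidableEq m]
    {A : Matrix m m ℝ} (hA : ∀ i j, 0 ≤ A i j) {z : ℂ} (hz : z ∈ spectrum ℂ (lapC A)) :
    z = 0 ∨ 0 < z.re := by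
  rw [← Matrix.spectrum_toLin', ← Module.End.hasEigenvalue_iff_mem_spectrum] at hz
  obtain ⟨i, hi⟩ := eigenvalue_mem_ball hz
  refine eq_zero_or_re_pos_of_mem_closedBall (r := ∑ j ∈ Finset.univ.erase i, A i j) ?_
  convert hi using 2
  · simp [lapC, lap, Finset.sum_erase_eq_sub (Finset.mem_univ i)]
  · refine Finset.sum_congr rfl fun j hj => ?_
    simp [lapC, lap, diagonal_apply_ne _ (Finset.ne_of_mem_erase hj).symm,
      abs_of_nonneg (hA i j)]

section AlgConn

variable {m : Type*} [Fintype m]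

theorem isCompact_unit_orthogonal_one :
    IsCompact {x : EuclideanSpace ℝ m | ‖x‖ = 1 ∧ (x : m → ℝ) ⬝ᵥ (fun _ => (1 : ℝ)) = 0} := by
  refine (isCompact_sphere (0 : EuclideanSpace ℝ m) 1).of_isClosed_subset ?_
    fun x hx => mem_sphere_zero_iff_norm.2 hx.1
  exact (isClosed_eq (by fun_prop) continuous_const).inter
    (isClosed_eq (by fun_prop) continuous_const)

theorem bddBelow_algConn_set (L : Matrix m m ℝ) :
    BddBelow { r | ∃ x : EuclideanSpace ℝ m, ‖x‖ = 1 ∧ (x : m → ℝ) ⬝ᵥ (fun _ => (1 : ℝ)) = 0 ∧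
      r = (x : m → ℝ) ⬝ᵥ L.mulVec (x : m → ℝ) } := by
  have himage : { r | ∃ x : EuclideanSpace ℝ m, ‖x‖ = 1 ∧
      (x : m → ℝ) ⬝ᵥ (fun _ => (1 : ℝ)) = 0 ∧ r = (x : m → ℝ) ⬝ᵥ L.mulVec (x : m → ℝ) } =
      (fun x : EuclideanSpace ℝ m => (x : m → ℝ) ⬝ᵥ L.mulVec (x : m → ℝ)) ''
        {x | ‖x‖ = 1 ∧ (x : m → ℝ) ⬝ᵥ (fun _ => (1 : ℝ)) = 0} := by
    ext r
    simp [eq_comm, and_assoc]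
  rw [himage]
  exact (isCompact_unit_orthogonal_one.image (by fun_prop)).bddBelow

theorem algConn_le (L : Matrix m m ℝ) {x : EuclideanSpace ℝ m} (hx : ‖x‖ = 1)
    (he : (x : m → ℝ) ⬝ᵥ (fun _ => (1 : ℝ)) = 0) :
    algConn L ≤ (x : m → ℝ) ⬝ᵥ L.mulVec (x : m → ℝ) :=
  csInf_le (bddBelow_algConn_set L) ⟨x, hx, he, rfl⟩

theorem algConn_mul_norm_sq_le (L : Matrix m m ℝ) {x : EuclideanSpace ℝ m}
    (he : (x : m → ℝ) ⬝ᵥ (fun _ => (1 : ℝ)) = 0) :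
    algConn L * ‖x‖ ^ 2 ≤ (x : m → ℝ) ⬝ᵥ L.mulVec (x : m → ℝ) := by
  rcases eq_or_ne x 0 with rfl | hx
  · simp
  have hle := algConn_le L (x := ‖x‖⁻¹ • x) (norm_smul_inv_norm hx)
    (by simp [smul_dotProduct, he])
  simp only [WithLp.ofLp_smul, mulVec_smul, smul_dotProduct, dotProduct_smul, smul_eq_mul]
    at hle
  have hpos : 0 < ‖x‖ := norm_pos_iff.2 hx
  calc algConn L * ‖x‖ ^ 2
      ≤ ‖x‖⁻¹ * (‖x‖⁻¹ * ((x : m → ℝ) ⬝ᵥ L.mulVec (x : m → ℝ))) * ‖x‖ ^ 2 := by gcongr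
    _ = (x : m → ℝ) ⬝ᵥ L.mulVec (x : m → ℝ) := by field_simp

end AlgConn

section RestrictedNumericalRange

variable {m : Type*} [Fintype m]

theorem re_star_dotProduct_map_ofReal_mulVec (L : Matrix m m ℝ) (x : m → ℂ) :
    (star x ⬝ᵥ (L.map ((↑) : ℝ → ℂ)) *ᵥ x).re =
      (fun i => (x i).re) ⬝ᵥ L *ᵥ (fun i => (x i).re) +
        (fun i => (x i).im) ⬝ᵥ L *ᵥ (fun i => (x i).im) := by
  simp only [dotProduct, mulVec, Pi.star_apply, map_apply, Complex.re_sum, Finset.mul_sum,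
    ← Finset.sum_add_distrib]
  refine Finset.sum_congr rfl fun i _ => Finset.sum_congr rfl fun j _ => ?_
  simp only [RCLike.star_def, Complex.mul_re, Complex.mul_im, Complex.conj_re, Complex.conj_im,
    Complex.ofReal_re, Complex.ofReal_im]
  ring

theorem algConn_le_re_of_mem_rnr (L : Matrix m m ℝ) {z : ℂ}
    (hz : z ∈ rnr (L.map ((↑) : ℝ → ℂ))) : algConn L ≤ z.re := by
  obtain ⟨x, hx, he, rfl⟩ := hz
  set u : EuclideanSpace ℝ m := WithLp.toLp 2 fun i => (x i).re
  set v : EuclideanSpace ℝ m := WithLp.toLp 2 fun i => (x i).im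
  have hue : (u : m → ℝ) ⬝ᵥ (fun _ => (1 : ℝ)) = 0 := by
    simpa [u, dotProduct, Complex.re_sum] using congrArg Complex.re he
  have hve : (v : m → ℝ) ⬝ᵥ (fun _ => (1 : ℝ)) = 0 := by
    simpa [v, dotProduct, Complex.im_sum] using congrArg Complex.im he
  have hnorm : ‖u‖ ^ 2 + ‖v‖ ^ 2 = 1 := by
    have hx2 : ‖x‖ ^ 2 = 1 := by rw [hx, one_pow]
    rw [EuclideanSpace.norm_sq_eq] at hx2
    rw [EuclideanSpace.real_norm_sq_eq, EuclideanSpace.real_norm_sq_eq, ← Finset.sum_add_distrib,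
      ← hx2]
    refine Finset.sum_congr rfl fun i _ => ?_
    rw [Complex.sq_norm, Complex.normSq_apply, sq, sq]
  rw [re_star_dotProduct_map_ofReal_mulVec]
  calc algConn L = algConn L * ‖u‖ ^ 2 + algConn L * ‖v‖ ^ 2 := by rw [← mul_add, hnorm, mul_one]
    _ ≤ _ := add_le_add (algConn_mul_norm_sq_le L hue) (algConn_mul_norm_sq_le L hve)

theorem ofReal_mem_rnr (L : Matrix m m ℝ) {x : EuclideanSpace ℝ m} (hx : ‖x‖ = 1)
    (he : (x : m → ℝ) ⬝ᵥ (fun _ => (1 : ℝ)) = 0) :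
    (((x : m → ℝ) ⬝ᵥ L.mulVec (x : m → ℝ) : ℝ) : ℂ) ∈ rnr (L.map ((↑) : ℝ → ℂ)) := by
  refine ⟨WithLp.toLp 2 fun i => (x i : ℂ), ?_, ?_, ?_⟩
  · simpa [EuclideanSpace.norm_eq] using hx
  · simpa [dotProduct] using congrArg ((↑) : ℝ → ℂ) he
  · simp [dotProduct, mulVec]

theorem exists_norm_eq_one_dotProduct_one_eq_zero (hm : 1 < Fintype.card m) :
    ∃ x : EuclideanSpace ℝ m, ‖x‖ = 1 ∧ (x : m → ℝ) ⬝ᵥ (fun _ => (1 : ℝ)) = 0 := by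
  classical
  obtain ⟨i, j, hij⟩ := Fintype.exists_pair_of_one_lt_card hm
  set y : EuclideanSpace ℝ m := EuclideanSpace.single i 1 - EuclideanSpace.single j 1
  have hy : y ≠ 0 := fun h => by simpa [y, hij] using congrArg (· i) h
  refine ⟨‖y‖⁻¹ • y, norm_smul_inv_norm hy, ?_⟩
  simp [y, dotProduct, ← Finset.mul_sum, Finset.sum_sub_distrib]

theorem le_algConn_of_forall_mem_rnr (L : Matrix m m ℝ) (hm : 1 < Fintype.card m) {c : ℝ}
    (h : ∀ z ∈ rnr (L.map ((↑) : ℝ → ℂ)), c ≤ z.re) : c ≤ algConn L := by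
  obtain ⟨x, hx, he⟩ := exists_norm_eq_one_dotProduct_one_eq_zero hm
  refine le_csInf ⟨_, x, hx, he, rfl⟩ ?_
  rintro _ ⟨y, hy, hye, rfl⟩
  simpa using h _ (ofReal_mem_rnr L hy hye)

theorem algConn_eq_re_of_rnr_eq_convexHull (L : Matrix m m ℝ) (hm : 1 < Fintype.card m)
    {S : Set ℂ} (hS : rnr (L.map ((↑) : ℝ → ℂ)) = convexHull ℝ S) {μ : ℂ} (hμ : μ ∈ S)
    (hmin : ∀ z ∈ S, μ.re ≤ z.re) : algConn L = μ.re := by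
  refine le_antisymm (algConn_le_re_of_mem_rnr L (hS ▸ subset_convexHull ℝ S hμ))
    (le_algConn_of_forall_mem_rnr L hm ?_)
  rw [hS]
  exact convexHull_min hmin (convex_halfSpace_re_ge μ.re)

end RestrictedNumericalRange

theorem two_le_rootMultiplicity_X_mul_iff {R : Type*} [CommRing R] [IsDomain R] {p : R[X]}
    (hp : p ≠ 0) : 2 ≤ (X * p).rootMultiplicity 0 ↔ p.IsRoot 0 := by
  have hX : (X : R[X]).rootMultiplicity 0 = 1 := by
    simpa using rootMultiplicity_X_sub_C_self (x := (0 : R))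
  rw [rootMultiplicity_mul (mul_ne_zero X_ne_zero hp), hX, ← rootMultiplicity_pos hp]
  omega

theorem re_eq_zero_iff_zero_mem_of_forall_re_le {S : Set ℂ} (hS : ∀ z ∈ S, z = 0 ∨ 0 < z.re)
    {μ : ℂ} (hμ : μ ∈ S) (hmin : ∀ z ∈ S, μ.re ≤ z.re) : μ.re = 0 ↔ (0 : ℂ) ∈ S := by
  refine ⟨fun hre => ?_, fun h0 => ?_⟩
  · rcases hS μ hμ with rfl | hpos
    exacts [hμ, absurd hre hpos.ne']
  · rcases hS μ hμ with rfl | hpos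
    exacts [Complex.zero_re, absurd (hmin 0 h0) (by simpa using hpos)]

/-- If `Γ` is polygonal, then `α(Γ) = 0` iff `0` is an eigenvalue of `QᴴLQ`,
equivalently iff the multiplicity of `0` as a root of the characteristic polynomial of `L`
is at least `2`. -/
theorem algConn_eq_zero_iff_of_polygonal {n : ℕ} (hn : 2 ≤ n)
    (A : Matrix (Fin n) (Fin n) ℝ) (hA : IsAdj A)
    (Q : Matrix (Fin n) (Fin (n - 1)) ℂ) (hQ : IsRestrictor Q)
    (hpoly : rnr (lapC A) = convexHull ℝ (spectrum ℂ (Qᴴ * lapC A * Q))) :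
    (algConn (lap A) = 0 ↔ (0 : ℂ) ∈ spectrum ℂ (Qᴴ * lapC A * Q)) ∧
    (algConn (lap A) = 0 ↔ 2 ≤ (Matrix.charpoly (lapC A)).rootMultiplicity 0) := by
  set S := spectrum ℂ (Qᴴ * lapC A * Q)
  have hm : 1 < Fintype.card (Fin n) := by rwa [Fintype.card_fin]
  have hfac : (lapC A).charpoly = X * (Qᴴ * lapC A * Q).charpoly :=
    hQ.charpoly_eq_X_mul_charpoly (lapC_mulVec_one A) (by simp; omega)
  have hS : ∀ z ∈ S, z = 0 ∨ 0 < z.re := fun z hz =>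
    eq_zero_or_re_pos_of_mem_spectrum_lapC hA.nonneg <| by
      rw [mem_spectrum_iff_isRoot_charpoly, hfac]
      exact (mem_spectrum_iff_isRoot_charpoly.1 hz).dvd (dvd_mul_left _ _)
  obtain ⟨x, hx, he⟩ := exists_norm_eq_one_dotProduct_one_eq_zero hm
  have hne : S.Nonempty := by
    rw [← convexHull_nonempty_iff (𝕜 := ℝ), ← hpoly]
    exact ⟨_, ofReal_mem_rnr (lap A) hx he⟩
  obtain ⟨μ, hμ, hmin⟩ := Set.exists_min_image S Complex.re (Matrix.finite_spectrum _) hne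
  have hzero : algConn (lap A) = 0 ↔ (0 : ℂ) ∈ S := by
    rw [algConn_eq_re_of_rnr_eq_convexHull (lap A) hm hpoly hμ hmin]
    exact re_eq_zero_iff_zero_mem_of_forall_re_le hS hμ hmin
  refine ⟨hzero, hzero.trans ?_⟩
  rw [hfac, two_le_rootMultiplicity_X_mul_iff (charpoly_monic _).ne_zero,
    mem_spectrum_iff_isRoot_charpoly]
end

section
/- Let Γ₁ and Γ₂ be balanced digraphs of orders n₁ ≥ 1 and n₂ ≥ 1 with Laplacians L₁ and L₂, and let L = fromBlocks (L₁ + n₂·I) (−J) 0 L₂, where J is the n₁×n₂ all-ones matrix; L is the Laplacian of the directed join Γ₁ →∨ Γ₂ of order n = n₁ + n₂. Then W_r(L) = convexHull ℝ ( { z + n₂ : z ∈ W_r(L₁) } ∪ W_r(L₂) ∪ {n₂} ), where ℂ is regarded as a real vector space. -/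
open Matrix

/-!
`W_r(M)` is convex (Toeplitz–Hausdorff): after an affine change `M ↦ c • M + d • 1` two of its
points become `0` and `1`, realised by vectors `f`, `g ⊥ e`; rotating `f` by a phase makes the
cross term `fᴴ M g + gᴴ M f` real, so the quadratic form is real along the real segment from
`f` to `g`, and the intermediate value theorem produces every `t ∈ [0, 1]` as a Rayleigh
quotient. This gives `⊇`, since vectors supported on one block realise the shifted `W_r(L₁)`
and `W_r(L₂)`, and `(n₂ e, -n₁ e)` realises `n₂`.

For `⊆`, write the blocks of a unit vector `x ⊥ e` as `u + α e` and `v + β e` with `u, v ⊥ e`,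
so that `n₁ α + n₂ β = 0`. For balanced digraphs `e` is a left and right null vector of `L₁`,
`L₂`, and `xᴴ L x = (uᴴ L₁ u + n₂ ‖u‖²) + vᴴ L₂ v + n₂ t` with `t = n₁ |α|² + n₂ |β|²` and
`‖u‖² + ‖v‖² + t = 1`: a convex combination of a point of `W_r(L₁) + n₂`, a point of `W_r(L₂)`
and `n₂` (a block that vanishes contributes with weight `0`).
-/

open scoped ComplexConjugate ComplexOrder

section RestrictedNumericalRange

variable {m : Type*} [Fintype m]

lemma star_dotProduct_self (x : m → ℂ) :
    star x ⬝ᵥ x = ((‖WithLp.toLp 2 x‖ ^ 2 : ℝ) : ℂ) := by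
  have h := inner_self_eq_norm_sq_to_K (𝕜 := ℂ) (WithLp.toLp 2 x)
  rw [EuclideanSpace.inner_toLp_toLp, dotProduct_comm] at h
  exact_mod_cast h

lemma star_smul_add_smul_dotProduct_mulVec (M : Matrix m m ℂ) (a b : ℂ) (f g : m → ℂ) :
    star (a • f + b • g) ⬝ᵥ M *ᵥ (a • f + b • g) =
      conj a * a * (star f ⬝ᵥ M *ᵥ f) + conj a * b * (star f ⬝ᵥ M *ᵥ g) +
        conj b * a * (star g ⬝ᵥ M *ᵥ f) + conj b * b * (star g ⬝ᵥ M *ᵥ g) := by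
  simp only [star_add, star_smul, mulVec_add, mulVec_smul, add_dotProduct, smul_dotProduct,
    dotProduct_add, dotProduct_smul, smul_eq_mul, Complex.star_def]
  ring

lemma star_smul_dotProduct_mulVec_smul (M : Matrix m m ℂ) (a : ℂ) (f : m → ℂ) :
    star (a • f) ⬝ᵥ M *ᵥ (a • f) = conj a * a * (star f ⬝ᵥ M *ᵥ f) := by
  simpa using star_smul_add_smul_dotProduct_mulVec M a 0 f 0

lemma star_smul_dotProduct_smul (a : ℂ) (f : m → ℂ) :
    star (a • f) ⬝ᵥ (a • f) = conj a * a * (star f ⬝ᵥ f) := by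
  simp only [star_smul, smul_dotProduct, dotProduct_smul, smul_eq_mul, Complex.star_def]
  ring

lemma mem_rnr_iff (M : Matrix m m ℂ) (z : ℂ) :
    z ∈ rnr M ↔ ∃ x : m → ℂ, star x ⬝ᵥ x = 1 ∧ star x ⬝ᵥ 1 = 0 ∧ z = star x ⬝ᵥ M *ᵥ x := by
  constructor
  · rintro ⟨x, hx, hx1, rfl⟩
    exact ⟨x.ofLp, by simp [star_dotProduct_self, hx], hx1, rfl⟩
  · rintro ⟨x, hx, hx1, rfl⟩
    refine ⟨WithLp.toLp 2 x, ?_, hx1, rfl⟩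
    rw [star_dotProduct_self] at hx
    exact (pow_eq_one_iff_of_nonneg (norm_nonneg _) two_ne_zero).1 (by exact_mod_cast hx)

lemma mem_rnr_iff_exists_ne_zero (M : Matrix m m ℂ) (z : ℂ) :
    z ∈ rnr M ↔ ∃ x : m → ℂ, x ≠ 0 ∧ star x ⬝ᵥ 1 = 0 ∧
      star x ⬝ᵥ M *ᵥ x = z * (star x ⬝ᵥ x) := by
  rw [mem_rnr_iff]
  constructor
  · rintro ⟨x, hx, hx1, rfl⟩
    refine ⟨x, ?_, hx1, by rw [hx, mul_one]⟩
    rintro rfl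
    simp at hx
  · rintro ⟨x, hx0, hx1, hz⟩
    have hr : (‖WithLp.toLp 2 x‖ : ℂ) ≠ 0 := by simpa using hx0
    set c : ℂ := ((‖WithLp.toLp 2 x‖⁻¹ : ℝ) : ℂ)
    have hcc : conj c * c * (star x ⬝ᵥ x) = 1 := by
      rw [star_dotProduct_self, Complex.conj_ofReal]
      simp only [c, Complex.ofReal_pow, Complex.ofReal_inv]
      field_simp
    refine ⟨c • x, ?_, ?_, ?_⟩
    · rw [star_smul_dotProduct_smul, hcc]
    · rw [star_smul, smul_dotProduct, hx1, smul_zero]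
    · rw [star_smul_dotProduct_mulVec_smul, hz, mul_left_comm, hcc, mul_one]

lemma exists_mem_insert_rnr_smul_eq (M : Matrix m m ℂ) {x : m → ℂ} (hx : star x ⬝ᵥ 1 = 0)
    (p₀ : ℂ) : ∃ p ∈ insert p₀ (rnr M), star x ⬝ᵥ M *ᵥ x = ‖WithLp.toLp 2 x‖ ^ 2 • p := by
  rcases eq_or_ne x 0 with rfl | hx0
  · exact ⟨p₀, Set.mem_insert _ _, by simp⟩
  have hN : star x ⬝ᵥ x ≠ 0 := by rwa [Ne, dotProduct_star_self_eq_zero]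
  refine ⟨(star x ⬝ᵥ M *ᵥ x) / (star x ⬝ᵥ x), Set.mem_insert_of_mem _ ?_, ?_⟩
  · exact (mem_rnr_iff_exists_ne_zero M _).2 ⟨x, hx0, hx, (div_mul_cancel₀ _ hN).symm⟩
  · rw [Complex.real_smul, Complex.ofReal_pow, ← Complex.ofReal_pow, ← star_dotProduct_self,
      mul_div_cancel₀ _ hN]

end RestrictedNumericalRange

section Convexity

variable {m : Type*} [Fintype m]

lemma rnr_smul_add_smul_one [DecidableEq m] (M : Matrix m m ℂ) (c d : ℂ) :
    rnr (c • M + d • 1) = (fun z => c * z + d) '' rnr M := by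
  have hQ : ∀ x : m → ℂ, star x ⬝ᵥ x = 1 →
      star x ⬝ᵥ (c • M + d • 1) *ᵥ x = c * (star x ⬝ᵥ M *ᵥ x) + d := by
    intro x hx
    rw [add_mulVec, smul_mulVec, smul_mulVec, one_mulVec, dotProduct_add, dotProduct_smul,
      dotProduct_smul, hx, smul_eq_mul, smul_eq_mul, mul_one]
  ext w
  simp only [mem_rnr_iff, Set.mem_image]
  constructor
  · rintro ⟨x, hx, hx1, rfl⟩
    exact ⟨_, ⟨x, hx, hx1, rfl⟩, (hQ x hx).symm⟩
  · rintro ⟨_, ⟨x, hx, hx1, rfl⟩, rfl⟩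
    exact ⟨x, hx, hx1, (hQ x hx).symm⟩

lemma smul_add_smul_ne_zero (M : Matrix m m ℂ) {f g : m → ℂ} (hf : f ≠ 0)
    (hQf : star f ⬝ᵥ M *ᵥ f = 0) (hQg : star g ⬝ᵥ M *ᵥ g ≠ 0) {a b : ℂ}
    (hab : a ≠ 0 ∨ b ≠ 0) : a • f + b • g ≠ 0 := by
  intro h
  rcases eq_or_ne b 0 with rfl | hb
  · simp_all
  · have hg : g = (-(b⁻¹ * a)) • f := by
      calc g = b⁻¹ • (b • g) := (inv_smul_smul₀ hb g).symm
        _ = b⁻¹ • -(a • f) := by rw [eq_neg_of_add_eq_zero_right h]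
        _ = (-(b⁻¹ * a)) • f := by rw [smul_neg, smul_smul, neg_smul]
    exact hQg (by rw [hg, star_smul_dotProduct_mulVec_smul, hQf, mul_zero])

lemma exists_smul_im_cross_eq_zero (M : Matrix m m ℂ) (f g : m → ℂ) :
    ∃ c : ℂ, c ≠ 0 ∧ (star (c • f) ⬝ᵥ M *ᵥ g + star g ⬝ᵥ M *ᵥ (c • f)).im = 0 := by
  -- For cross terms `a`, `b`, `Im (c̄ a + c b) = Im (c̄ (a - b̄))`, which vanishes at `c = a - b̄`.
  set d := star f ⬝ᵥ M *ᵥ g - conj (star g ⬝ᵥ M *ᵥ f)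
  have key : ∀ c : ℂ,
      (star (c • f) ⬝ᵥ M *ᵥ g + star g ⬝ᵥ M *ᵥ (c • f)).im = (conj c * d).im := by
    intro c
    simp only [star_smul, smul_dotProduct, mulVec_smul, dotProduct_smul, smul_eq_mul,
      Complex.star_def, d, Complex.add_im, Complex.mul_im, Complex.sub_re, Complex.sub_im,
      Complex.conj_re, Complex.conj_im]
    ring
  rcases eq_or_ne d 0 with hd | hd
  · exact ⟨1, one_ne_zero, by rw [key, hd, mul_zero, Complex.zero_im]⟩
  · exact ⟨d, hd, by rw [key, ← Complex.normSq_eq_conj_mul_self, Complex.ofReal_im]⟩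

lemma ofReal_mem_rnr_of_im_cross_eq_zero (M : Matrix m m ℂ) {f g : m → ℂ} (hf : f ≠ 0)
    (hg : g ≠ 0) (hf1 : star f ⬝ᵥ 1 = 0) (hg1 : star g ⬝ᵥ 1 = 0)
    (hQf : star f ⬝ᵥ M *ᵥ f = 0) (hQg : star g ⬝ᵥ M *ᵥ g = star g ⬝ᵥ g)
    (hcross : (star f ⬝ᵥ M *ᵥ g + star g ⬝ᵥ M *ᵥ f).im = 0) {t : ℝ}
    (ht : t ∈ Set.Icc (0 : ℝ) 1) : (t : ℂ) ∈ rnr M := by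
  set x : ℝ → m → ℂ := fun u => ((1 - u : ℝ) : ℂ) • f + (u : ℂ) • g
  have hQ : ∀ u : ℝ, star (x u) ⬝ᵥ M *ᵥ x u = ((u * (1 - u) : ℝ) : ℂ) *
      (star f ⬝ᵥ M *ᵥ g + star g ⬝ᵥ M *ᵥ f) + ((u ^ 2 : ℝ) : ℂ) * (star g ⬝ᵥ g) := by
    intro u
    simp only [x, star_smul_add_smul_dotProduct_mulVec, Complex.conj_ofReal, hQf, hQg]
    push_cast
    ring
  set φ : ℝ → ℝ := fun u => (star (x u) ⬝ᵥ M *ᵥ x u - t * (star (x u) ⬝ᵥ x u)).re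
  have hφ : Continuous φ := by fun_prop
  have hφ0 : φ 0 ≤ 0 := by
    have hx0 : x 0 = f := by simp [x]
    simp only [φ, hx0, hQf, zero_sub, star_dotProduct_self, ← Complex.ofReal_mul,
      Complex.neg_re, Complex.ofReal_re, neg_nonpos]
    exact mul_nonneg ht.1 (sq_nonneg _)
  have hφ1 : 0 ≤ φ 1 := by
    have hx1 : x 1 = g := by simp [x]
    simp only [φ, hx1, hQg, star_dotProduct_self, ← Complex.ofReal_mul, ← Complex.ofReal_sub,
      Complex.ofReal_re, sub_nonneg]
    exact mul_le_of_le_one_left (sq_nonneg _) ht.2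
  obtain ⟨u, hu, hφu⟩ := intermediate_value_Icc zero_le_one hφ.continuousOn ⟨hφ0, hφ1⟩
  have hQt : star (x u) ⬝ᵥ M *ᵥ x u = t * (star (x u) ⬝ᵥ x u) := by
    refine Complex.ext (by simpa [φ, sub_eq_zero] using hφu) ?_
    rw [hQ, star_dotProduct_self, star_dotProduct_self]
    simp only [Complex.add_im, Complex.mul_im, Complex.ofReal_re, Complex.ofReal_im, hcross]
    ring
  refine (mem_rnr_iff_exists_ne_zero M t).2 ⟨x u, ?_, ?_, hQt⟩
  · refine smul_add_smul_ne_zero M hf hQf (by rwa [hQg, Ne, dotProduct_star_self_eq_zero]) ?_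
    rcases eq_or_ne u 0 with rfl | hu0
    · simp
    · exact Or.inr (by exact_mod_cast hu0)
  · simp [x, star_add, star_smul, add_dotProduct, smul_dotProduct, hf1, hg1]

lemma ofReal_mem_rnr_of_zero_mem_of_one_mem {M : Matrix m m ℂ} (h0 : 0 ∈ rnr M)
    (h1 : 1 ∈ rnr M) {t : ℝ} (ht : t ∈ Set.Icc (0 : ℝ) 1) : (t : ℂ) ∈ rnr M := by
  obtain ⟨f, hf, hf1, hQf⟩ := (mem_rnr_iff_exists_ne_zero M 0).1 h0
  obtain ⟨g, hg, hg1, hQg⟩ := (mem_rnr_iff_exists_ne_zero M 1).1 h1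
  obtain ⟨c, hc, hcross⟩ := exists_smul_im_cross_eq_zero M f g
  refine ofReal_mem_rnr_of_im_cross_eq_zero M (smul_ne_zero hc hf) hg ?_ hg1 ?_
    (by rw [hQg, one_mul]) hcross ht
  · rw [star_smul, smul_dotProduct, hf1, smul_zero]
  · rw [star_smul_dotProduct_mulVec_smul, hQf, zero_mul, mul_zero]

theorem convex_rnr (M : Matrix m m ℂ) : Convex ℝ (rnr M) := by
  classical
  intro z₁ hz₁ z₂ hz₂ a b ha hb hab
  rcases eq_or_ne z₁ z₂ with rfl | hne
  · rwa [Convex.combo_self hab]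
  have hz : z₂ - z₁ ≠ 0 := sub_ne_zero.2 hne.symm
  set c := (z₂ - z₁)⁻¹
  have hmem : ∀ z ∈ rnr M, c * (z - z₁) ∈ rnr (c • M + (-(c * z₁)) • 1) := fun z hz => by
    rw [rnr_smul_add_smul_one]
    exact ⟨z, hz, by ring⟩
  have h0 := hmem z₁ hz₁
  have h1 := hmem z₂ hz₂
  rw [sub_self, mul_zero] at h0
  rw [inv_mul_cancel₀ hz] at h1
  obtain ⟨w, hw, hwb⟩ := rnr_smul_add_smul_one M _ _ ▸
    ofReal_mem_rnr_of_zero_mem_of_one_mem h0 h1 ⟨hb, by linarith⟩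
  convert hw using 1
  rw [Complex.real_smul, Complex.real_smul, eq_sub_of_add_eq hab, Complex.ofReal_sub,
    Complex.ofReal_one]
  linear_combination -(z₂ - z₁) * hwb + (w - z₁) * mul_inv_cancel₀ hz

end Convexity

section Laplacian

variable {k : Type*} [Fintype k] [DecidableEq k]

lemma lapC_mulVec_one_s6 (A : Matrix k k ℝ) : lapC A *ᵥ 1 = 0 := by
  ext i
  simp [lapC, lap, mulVec, dotProduct, diagonal_apply, Finset.sum_sub_distrib, apply_ite]

lemma one_vecMul_lapC {A : Matrix k k ℝ} (hA : Bal A) : 1 ᵥ* lapC A = 0 := by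
  ext j
  simp [lapC, lap, vecMul, dotProduct, diagonal_apply, Finset.sum_sub_distrib, apply_ite,
    ← Complex.ofReal_sum, hA j]

end Laplacian

section AllOnesVector

variable {k l : Type*} [Fintype k] [Fintype l]

lemma exists_eq_add_smul_one (y : k → ℂ) :
    ∃ u : k → ℂ, ∃ α : ℂ, y = u + α • 1 ∧ star u ⬝ᵥ 1 = 0 := by
  set α : ℂ := (∑ i, y i) / Fintype.card k
  refine ⟨y - α • 1, α, (sub_add_cancel _ _).symm, ?_⟩
  rw [star_dotProduct, star_eq_zero, star_one, one_dotProduct]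
  simp only [Pi.sub_apply, Pi.smul_apply, Pi.one_apply, smul_eq_mul, mul_one,
    Finset.sum_sub_distrib, Finset.sum_const, Finset.card_univ, nsmul_eq_mul, α]
  rcases isEmpty_or_nonempty k with hk | hk
  · simp
  · field_simp
    ring

lemma star_add_smul_one_dotProduct_mulVec {L : Matrix k k ℂ} (hr : L *ᵥ 1 = 0)
    (hc : 1 ᵥ* L = 0) (u : k → ℂ) (α : ℂ) :
    star (u + α • 1) ⬝ᵥ L *ᵥ (u + α • 1) = star u ⬝ᵥ L *ᵥ u := by
  rw [mulVec_add, mulVec_smul, hr, smul_zero, add_zero, star_add, add_dotProduct, star_smul,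
    smul_dotProduct, star_one, dotProduct_mulVec 1, hc, zero_dotProduct, smul_zero, add_zero]

lemma one_dotProduct_eq_star (x : k → ℂ) : 1 ⬝ᵥ x = star (star x ⬝ᵥ 1) := by
  simpa using star_dotProduct (1 : k → ℂ) x

lemma star_add_smul_one_dotProduct_self {u : k → ℂ} (hu : star u ⬝ᵥ 1 = 0) (α : ℂ) :
    star (u + α • 1) ⬝ᵥ (u + α • 1) =
      star u ⬝ᵥ u + Fintype.card k * (Complex.normSq α : ℂ) := by
  have hu' : 1 ⬝ᵥ u = 0 := by rw [one_dotProduct_eq_star, hu, star_zero]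
  simp only [star_add, star_smul, star_one, add_dotProduct, dotProduct_add, smul_dotProduct,
    dotProduct_smul, hu, hu', one_dotProduct_one, Complex.normSq_eq_conj_mul_self,
    smul_eq_mul, Complex.star_def]
  ring

lemma star_dotProduct_of_one_mulVec (x : k → ℂ) (y : l → ℂ) :
    star x ⬝ᵥ (of fun _ _ => (1 : ℂ) : Matrix k l ℂ) *ᵥ y = (star x ⬝ᵥ 1) * (1 ⬝ᵥ y) := by
  simp [dotProduct, mulVec, Finset.sum_mul]

lemma star_sumElim_dotProduct_one (x : k → ℂ) (y : l → ℂ) :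
    star (Sum.elim x y) ⬝ᵥ 1 = star x ⬝ᵥ 1 + star y ⬝ᵥ 1 := by
  rw [← Sum.elim_one_one, Function.star_sumElim, sumElim_dotProduct_sumElim]

lemma star_sumElim_dotProduct_self {u : k → ℂ} {v : l → ℂ} (hu : star u ⬝ᵥ 1 = 0)
    (hv : star v ⬝ᵥ 1 = 0) (α β : ℂ) :
    star (Sum.elim (u + α • 1) (v + β • 1)) ⬝ᵥ Sum.elim (u + α • 1) (v + β • 1) =
      star u ⬝ᵥ u + star v ⬝ᵥ v +
        (Fintype.card k * Complex.normSq α + Fintype.card l * Complex.normSq β : ℂ) := by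
  rw [Function.star_sumElim, sumElim_dotProduct_sumElim, star_add_smul_one_dotProduct_self hu,
    star_add_smul_one_dotProduct_self hv]
  ring

end AllOnesVector

lemma Convex.smul_add_smul_add_smul_mem {E : Type*} [AddCommGroup E] [Module ℝ E] {s : Set E}
    (hs : Convex ℝ s) {x y z : E} (hx : x ∈ s) (hy : y ∈ s) (hz : z ∈ s) {a b c : ℝ}
    (ha : 0 ≤ a) (hb : 0 ≤ b) (hc : 0 ≤ c) (habc : a + b + c = 1) :
    a • x + b • y + c • z ∈ s := by
  have h := hs.sum_mem (t := Finset.univ) (w := ![a, b, c]) (z := ![x, y, z])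
    (by simp [Fin.forall_fin_succ, ha, hb, hc]) (by simpa [Fin.sum_univ_three] using habc)
    (by simp [Fin.forall_fin_succ, hx, hy, hz])
  simpa [Fin.sum_univ_three] using h

section DirectedJoin

variable {k l : Type*} [Fintype k] [Fintype l] [DecidableEq k]
variable {L₁ : Matrix k k ℂ} {L₂ : Matrix l l ℂ}

/-- Laplacian of the directed join of two digraphs with Laplacians `L₁` and `L₂`: every
vertex of the first part gains an out-edge to each vertex of the second part. -/
noncomputable def directedJoinLap (L₁ : Matrix k k ℂ) (L₂ : Matrix l l ℂ) :
    Matrix (k ⊕ l) (k ⊕ l) ℂ :=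
  fromBlocks (L₁ + (Fintype.card l : ℂ) • 1) (-of fun _ _ => 1) 0 L₂

lemma star_dotProduct_directedJoinLap_mulVec (hr₁ : L₁ *ᵥ 1 = 0) (hc₁ : 1 ᵥ* L₁ = 0)
    (hr₂ : L₂ *ᵥ 1 = 0) (hc₂ : 1 ᵥ* L₂ = 0) {u : k → ℂ} {v : l → ℂ}
    (hu : star u ⬝ᵥ 1 = 0) (hv : star v ⬝ᵥ 1 = 0) {α β : ℂ}
    (hx : star (Sum.elim (u + α • 1) (v + β • 1)) ⬝ᵥ 1 = 0) :
    star (Sum.elim (u + α • 1) (v + β • 1)) ⬝ᵥ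
        directedJoinLap L₁ L₂ *ᵥ Sum.elim (u + α • 1) (v + β • 1) =
      (star u ⬝ᵥ L₁ *ᵥ u + Fintype.card l * (star u ⬝ᵥ u)) + star v ⬝ᵥ L₂ *ᵥ v +
        Fintype.card l *
          (Fintype.card k * Complex.normSq α + Fintype.card l * Complex.normSq β : ℂ) := by
  have hs₂ : star (v + β • 1) ⬝ᵥ 1 = star β * Fintype.card l := by
    simp [add_dotProduct, hv, one_dotProduct_one]
  have hs₁ : star (u + α • 1) ⬝ᵥ 1 = -(star β * Fintype.card l) := by
    rw [← hs₂, ← add_eq_zero_iff_eq_neg, ← star_sumElim_dotProduct_one, hx]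
  have h1v : 1 ⬝ᵥ (v + β • 1) = β * Fintype.card l := by
    rw [one_dotProduct_eq_star, hs₂, star_mul', star_star, star_natCast]
  rw [directedJoinLap, fromBlocks_mulVec, Function.star_sumElim, sumElim_dotProduct_sumElim,
    Sum.elim_comp_inl, Sum.elim_comp_inr, zero_mulVec, zero_add, add_mulVec, smul_mulVec,
    one_mulVec, neg_mulVec]
  simp only [dotProduct_add, dotProduct_neg, dotProduct_smul, star_dotProduct_of_one_mulVec, hs₁,
    h1v, star_add_smul_one_dotProduct_mulVec hr₁ hc₁, star_add_smul_one_dotProduct_mulVec hr₂ hc₂,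
    star_add_smul_one_dotProduct_self hu, smul_eq_mul, Complex.normSq_eq_conj_mul_self,
    Complex.star_def]
  ring

lemma rnr_directedJoinLap_subset (hr₁ : L₁ *ᵥ 1 = 0) (hc₁ : 1 ᵥ* L₁ = 0)
    (hr₂ : L₂ *ᵥ 1 = 0) (hc₂ : 1 ᵥ* L₂ = 0) :
    rnr (directedJoinLap L₁ L₂) ⊆ convexHull ℝ
      ((fun z => z + (Fintype.card l : ℂ)) '' rnr L₁ ∪ rnr L₂ ∪ {(Fintype.card l : ℂ)}) := by
  set S := (fun z => z + (Fintype.card l : ℂ)) '' rnr L₁ ∪ rnr L₂ ∪ {(Fintype.card l : ℂ)}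
  intro z hz
  obtain ⟨x, hxx, hx1, rfl⟩ := (mem_rnr_iff _ z).1 hz
  obtain ⟨u, α, hx₁, hu⟩ := exists_eq_add_smul_one (x ∘ Sum.inl)
  obtain ⟨v, β, hx₂, hv⟩ := exists_eq_add_smul_one (x ∘ Sum.inr)
  have hx : x = Sum.elim (u + α • 1) (v + β • 1) := by rw [← hx₁, ← hx₂, Sum.elim_comp_inl_inr]
  rw [hx] at hxx hx1 ⊢
  rw [star_dotProduct_directedJoinLap_mulVec hr₁ hc₁ hr₂ hc₂ hu hv hx1]
  rw [star_sumElim_dotProduct_self hu hv, star_dotProduct_self u, star_dotProduct_self v] at hxx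
  obtain ⟨p, hp, hQu⟩ := exists_mem_insert_rnr_smul_eq L₁ hu 0
  obtain ⟨q, hq, hQv⟩ := exists_mem_insert_rnr_smul_eq L₂ hv (Fintype.card l)
  set t := (Fintype.card k * Complex.normSq α + Fintype.card l * Complex.normSq β : ℝ)
  have ht : 0 ≤ t := by
    have := Complex.normSq_nonneg α
    have := Complex.normSq_nonneg β
    positivity
  have hsum : ‖WithLp.toLp 2 u‖ ^ 2 + ‖WithLp.toLp 2 v‖ ^ 2 + t = 1 := by
    exact_mod_cast hxx
  have hp' : p + Fintype.card l ∈ S := by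
    rcases hp with rfl | hp
    · simp [S]
    · exact Or.inl (Or.inl ⟨p, hp, rfl⟩)
  have hq' : q ∈ S := by
    rcases hq with rfl | hq
    · simp [S]
    · exact Or.inl (Or.inr hq)
  convert (convex_convexHull ℝ _).smul_add_smul_add_smul_mem (subset_convexHull ℝ _ hp')
    (subset_convexHull ℝ _ hq') (subset_convexHull ℝ _ (Set.mem_union_right _ rfl))
    (sq_nonneg _) (sq_nonneg _) ht hsum using 1
  rw [star_dotProduct_self u, hQu, hQv]
  simp only [Complex.real_smul, t]
  push_cast
  ring

lemma add_card_mem_rnr_directedJoinLap {z : ℂ} (hz : z ∈ rnr L₁) :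
    z + Fintype.card l ∈ rnr (directedJoinLap L₁ L₂) := by
  obtain ⟨f, hf, hf1, rfl⟩ := (mem_rnr_iff _ z).1 hz
  refine (mem_rnr_iff _ _).2 ⟨Sum.elim f 0, ?_, ?_, ?_⟩
  · simp [Function.star_sumElim, hf]
  · simp [star_sumElim_dotProduct_one, hf1]
  · simp [directedJoinLap, fromBlocks_mulVec, Function.star_sumElim, add_mulVec,
      dotProduct_add, smul_mulVec, dotProduct_smul, hf]

lemma mem_rnr_directedJoinLap_of_mem_right {z : ℂ} (hz : z ∈ rnr L₂) :
    z ∈ rnr (directedJoinLap L₁ L₂) := by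
  obtain ⟨g, hg, hg1, rfl⟩ := (mem_rnr_iff _ z).1 hz
  refine (mem_rnr_iff _ _).2 ⟨Sum.elim 0 g, ?_, ?_, ?_⟩
  · simp [Function.star_sumElim, hg]
  · simp [star_sumElim_dotProduct_one, hg1]
  · simp [directedJoinLap, fromBlocks_mulVec, Function.star_sumElim]

lemma card_mem_rnr_directedJoinLap [Nonempty k] [Nonempty l] (hr₁ : L₁ *ᵥ 1 = 0)
    (hc₁ : 1 ᵥ* L₁ = 0) (hr₂ : L₂ *ᵥ 1 = 0) (hc₂ : 1 ᵥ* L₂ = 0) :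
    (Fintype.card l : ℂ) ∈ rnr (directedJoinLap L₁ L₂) := by
  set x := Sum.elim ((0 : k → ℂ) + (Fintype.card l : ℂ) • 1)
    ((0 : l → ℂ) + (-(Fintype.card k : ℂ)) • 1)
  have hx1 : star x ⬝ᵥ 1 = 0 := by
    simp [x, star_sumElim_dotProduct_one, one_dotProduct_one, mul_comm]
  refine (mem_rnr_iff_exists_ne_zero _ _).2 ⟨x, ?_, hx1, ?_⟩
  · intro h
    simpa [x] using congrFun h (Sum.inl (Classical.arbitrary k))
  · rw [star_dotProduct_directedJoinLap_mulVec hr₁ hc₁ hr₂ hc₂ (by simp) (by simp) hx1,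
      star_sumElim_dotProduct_self (by simp) (by simp)]
    simp

theorem rnr_directedJoinLap [Nonempty k] [Nonempty l] (hr₁ : L₁ *ᵥ 1 = 0)
    (hc₁ : 1 ᵥ* L₁ = 0) (hr₂ : L₂ *ᵥ 1 = 0) (hc₂ : 1 ᵥ* L₂ = 0) :
    rnr (directedJoinLap L₁ L₂) = convexHull ℝ
      ((fun z => z + (Fintype.card l : ℂ)) '' rnr L₁ ∪ rnr L₂ ∪ {(Fintype.card l : ℂ)}) := by
  refine (rnr_directedJoinLap_subset hr₁ hc₁ hr₂ hc₂).antisymm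
    (convexHull_min ?_ (convex_rnr _))
  rintro z ((⟨z, hz, rfl⟩ | hz) | rfl)
  · exact add_card_mem_rnr_directedJoinLap hz
  · exact mem_rnr_directedJoinLap_of_mem_right hz
  · exact card_mem_rnr_directedJoinLap hr₁ hc₁ hr₂ hc₂

end DirectedJoin

theorem rnr_directed_join_general {n₁ n₂ : ℕ} (h₁ : 1 ≤ n₁) (h₂ : 1 ≤ n₂)
    (A₁ : Matrix (Fin n₁) (Fin n₁) ℝ) (A₂ : Matrix (Fin n₂) (Fin n₂) ℝ)
    (hb₁ : Bal A₁) (hb₂ : Bal A₂) :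
    rnr (Matrix.fromBlocks
        (lapC A₁ + (n₂ : ℂ) • (1 : Matrix (Fin n₁) (Fin n₁) ℂ))
        (-(Matrix.of fun _ _ => (1 : ℂ))) 0 (lapC A₂)) =
      convexHull ℝ (((fun z => z + (n₂ : ℂ)) '' rnr (lapC A₁)) ∪ rnr (lapC A₂)
        ∪ {(n₂ : ℂ)}) := by
  have : Nonempty (Fin n₁) := Fin.pos_iff_nonempty.1 h₁
  have : Nonempty (Fin n₂) := Fin.pos_iff_nonempty.1 h₂
  simpa [directedJoinLap] using rnr_directedJoinLap (lapC_mulVec_one_s6 A₁) (one_vecMul_lapC hb₁)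
    (lapC_mulVec_one_s6 A₂) (one_vecMul_lapC hb₂)

/-- For balanced digraphs `Γ₁, Γ₂`, the restricted numerical range of the
directed join satisfies
`W_r(Γ₁ →∨ Γ₂) = conv((W_r(Γ₁) + n₂) ∪ W_r(Γ₂) ∪ {n₂})`. -/
theorem rnr_directed_join {n₁ n₂ : ℕ} (h₁ : 1 ≤ n₁) (h₂ : 1 ≤ n₂)
    (A₁ : Matrix (Fin n₁) (Fin n₁) ℝ) (A₂ : Matrix (Fin n₂) (Fin n₂) ℝ)
    (hA₁ : IsAdj A₁) (hA₂ : IsAdj A₂) (hb₁ : Bal A₁) (hb₂ : Bal A₂) :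
    rnr (Matrix.fromBlocks
        (lapC A₁ + (n₂ : ℂ) • (1 : Matrix (Fin n₁) (Fin n₁) ℂ))
        (-(Matrix.of fun _ _ => (1 : ℂ))) 0 (lapC A₂)) =
      convexHull ℝ (((fun z => z + (n₂ : ℂ)) '' rnr (lapC A₁)) ∪ rnr (lapC A₂)
        ∪ {(n₂ : ℂ)}) :=
  rnr_directed_join_general h₁ h₂ A₁ A₂ hb₁ hb₂
end

section
/- Let Γ be a digraph of order n ≥ 1 with Laplacian L, let Q be a restrictor matrix of order n, and let P = I − (1/n)·e·eᵀ be the orthogonal projector onto the orthogonal complement of e. Then QᴴLQ is a normal matrix if and only if P·L is a normal matrix. -/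
open Matrix

/-!
Since the rows of `L` sum to zero, `L P = L`, and since `Q` has orthonormal columns spanning
`e^⊥` (its columns together with `e` form a basis), `Q Qᴴ = P`. Hence
`P L = P L P = Q (Qᴴ L Q) Qᴴ`, and `Y ↦ Q Y Qᴴ` is an injective map with
`(Q Y Qᴴ)ᴴ (Q Y Qᴴ) = Q (Yᴴ Y) Qᴴ` and `(Q Y Qᴴ) (Q Y Qᴴ)ᴴ = Q (Y Yᴴ) Qᴴ`, so it preserves and
reflects normality.
-/

theorem isNormalM_mul_mul_conjTranspose_iff {m k R : Type*} [Fintype m] [Fintype k]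
    [DecidableEq k] [Semiring R] [StarRing R] {Q : Matrix m k R} (hQ : Qᴴ * Q = 1)
    (Y : Matrix k k R) : IsNormalM (Q * Y * Qᴴ) ↔ IsNormalM Y := by
  have compress : ∀ X : Matrix k k R, Qᴴ * (Q * X * Qᴴ) * Q = X := fun X => by
    simp only [← Matrix.mul_assoc, hQ, Matrix.one_mul]
    rw [Matrix.mul_assoc, hQ, Matrix.mul_one]
  have expand : ∀ X Z : Matrix k k R, Q * X * Qᴴ * (Q * Z * Qᴴ) = Q * (X * Z) * Qᴴ :=
    fun X Z => by simp only [Matrix.mul_assoc, ← Matrix.mul_assoc Qᴴ Q, hQ, Matrix.one_mul]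
  have hstar : (Q * Y * Qᴴ)ᴴ = Q * Yᴴ * Qᴴ := by
    simp only [conjTranspose_mul, conjTranspose_conjTranspose, Matrix.mul_assoc]
  unfold IsNormalM
  rw [star_eq_conjTranspose, star_eq_conjTranspose, hstar, expand, expand]
  exact ⟨fun h => by simpa only [compress] using congrArg (fun X => Qᴴ * X * Q) h,
    fun h => by rw [h]⟩

theorem IsRestrictor.mul_conjTranspose {m k : Type*} [Fintype m] [Fintype k] [DecidableEq m]
    [DecidableEq k] {Q : Matrix m k ℂ} (hQ : IsRestrictor Q)
    (hcard : Fintype.card m = Fintype.card k + 1) :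
    Q * Qᴴ = 1 - ((Fintype.card m : ℂ))⁻¹ • (Matrix.of fun _ _ => (1 : ℂ)) := by
  set E : Matrix m Unit ℂ := Matrix.of fun _ _ => 1
  have hQE : Qᴴ * E = 0 := by
    ext j u
    simpa [E, Matrix.mul_apply, Matrix.mulVec, dotProduct] using congrFun hQ.2 j
  have hEQ : Eᴴ * Q = 0 := by
    simpa only [conjTranspose_mul, conjTranspose_zero, conjTranspose_conjTranspose]
      using congrArg conjTranspose hQE
  have hEE : Eᴴ * E = (Fintype.card m : ℂ) • 1 := by
    ext u v
    simp [E, Matrix.mul_apply]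
  have hcard_ne : (Fintype.card m : ℂ) ≠ 0 := by
    rw [hcard]; exact Nat.cast_ne_zero.2 (Nat.succ_ne_zero _)
  -- `[Qᴴ; eᴴ/n]` is a left inverse of the square matrix `[Q | e]`, hence also a right inverse.
  have hleft : fromRows Qᴴ ((Fintype.card m : ℂ)⁻¹ • Eᴴ) * fromCols Q E = 1 := by
    rw [fromRows_mul_fromCols, hQ.1, hQE, Matrix.smul_mul, hEQ, Matrix.smul_mul, hEE, smul_zero,
      smul_smul, inv_mul_cancel₀ hcard_ne, one_smul, fromBlocks_one]
  have hequiv : m ≃ k ⊕ Unit := Fintype.equivOfCardEq (by simp [hcard])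
  have hright := (fromCols_mul_fromRows_eq_one_comm hequiv _ _ _ _).2 hleft
  have hEEt : E * Eᴴ = Matrix.of fun _ _ => (1 : ℂ) := by
    ext i j
    simp [E, Matrix.mul_apply]
  rw [fromCols_mul_fromRows, Matrix.mul_smul, hEEt] at hright
  exact eq_sub_of_add_eq hright

theorem lapC_mul_ones {m : Type*} [Fintype m] [DecidableEq m] (A : Matrix m m ℝ) :
    lapC A * (Matrix.of fun _ _ => (1 : ℂ)) = 0 := by
  ext i k
  simp only [Matrix.mul_apply, Matrix.of_apply, mul_one, Matrix.zero_apply,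
    lapC, lap, Matrix.map_apply, Matrix.sub_apply, Matrix.diagonal_apply]
  push_cast
  simp [Finset.sum_sub_distrib, apply_ite (fun x : ℝ => (x : ℂ))]

theorem restricted_normal_iff_projected_normal_general {n : ℕ} (hn : 1 ≤ n)
    (A : Matrix (Fin n) (Fin n) ℝ)
    (Q : Matrix (Fin n) (Fin (n - 1)) ℂ) (hQ : IsRestrictor Q)
    (P : Matrix (Fin n) (Fin n) ℂ)
    (hP : P = (1 : Matrix (Fin n) (Fin n) ℂ) - ((n : ℂ))⁻¹ • (Matrix.of fun _ _ => (1 : ℂ))) :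
    IsNormalM (Qᴴ * lapC A * Q) ↔ IsNormalM (P * lapC A) := by
  have hQQ : Q * Qᴴ = P := by
    have hcard : Fintype.card (Fin n) = Fintype.card (Fin (n - 1)) + 1 := by
      rw [Fintype.card_fin, Fintype.card_fin]; omega
    rw [hQ.mul_conjTranspose hcard, hP, Fintype.card_fin]
  have hLP : lapC A * P = lapC A := by
    rw [hP, Matrix.mul_sub, Matrix.mul_one, Matrix.mul_smul, lapC_mul_ones, smul_zero, sub_zero]
  have hPL : P * lapC A = Q * (Qᴴ * lapC A * Q) * Qᴴ := by
    calc P * lapC A = P * (lapC A * P) := by rw [hLP]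
      _ = Q * (Qᴴ * lapC A * Q) * Qᴴ := by rw [← hQQ]; simp only [Matrix.mul_assoc]
  rw [hPL, isNormalM_mul_mul_conjTranspose_iff hQ.1]

/-- With `P = I - (1/n)·e·eᵀ` the projector onto `e^⊥`,
`QᴴLQ` is normal iff `P·L` is normal. -/
theorem restricted_normal_iff_projected_normal {n : ℕ} (hn : 1 ≤ n)
    (A : Matrix (Fin n) (Fin n) ℝ) (hA : IsAdj A)
    (Q : Matrix (Fin n) (Fin (n - 1)) ℂ) (hQ : IsRestrictor Q)
    (P : Matrix (Fin n) (Fin n) ℂ)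
    (hP : P = (1 : Matrix (Fin n) (Fin n) ℂ) - ((n : ℂ))⁻¹ • (Matrix.of fun _ _ => (1 : ℂ))) :
    IsNormalM (Qᴴ * lapC A * Q) ↔ IsNormalM (P * lapC A) :=
  restricted_normal_iff_projected_normal_general hn A Q hQ P hP
end

section
/- Let Γ be a digraph of order n with vertex set V, Laplacian L, and let Q be a restrictor matrix of order n. Fix any vertex k ∈ V. Then Γ is restricted-normal (i.e., QᴴLQ is normal and L is not normal) if and only if Γ is not balanced and for all i, j ∈ V∖{k}: (ι(i) − ι(k))·(ι(j) − ι(k)) = n·( ⟨L(e_i − e_k), L(e_j − e_k)⟩ − ⟨Lᵀ(e_i − e_k), Lᵀ(e_j − e_k)⟩ ), where e_i denotes the i-th standard basis vector and ⟨·,·⟩ the standard real inner product. -/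
open Matrix

/-- Imbalance of a vertex: `ι(i) = d⁺(i) - d⁻(i)`. -/
noncomputable def imb {m : Type*} [Fintype m] (A : Matrix m m ℝ) (i : m) : ℝ :=
  (∑ j, A i j) - ∑ j, A j i

/-! For a restrictor `Q` one has `Q Qᴴ = I - J/n`, the difference being an idempotent of trace
zero. Since `L e = 0`, this turns the self-commutator of `M = Qᴴ L Q` into `Mᴴ M - M Mᴴ = Qᴴ S Q`
with `S = LᵀL - LLᵀ - ιιᵀ/n`, where `ι = Lᵀ e` is the imbalance vector. So `M` is normal iff the
form of `S` vanishes on `eᗮ`, and evaluating it on the spanning vectors `e_i - e_k` gives exactly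
the imbalance identity. Under that identity, normality of `L` forces `(ι_i - ι_k)² = 0`, so `ι`
is constant, hence zero as `∑ ι = 0`; conversely if `ι = 0` then `S = LᵀL - LLᵀ` kills `e` on
both sides, so vanishing on `eᗮ` means `S = 0`. -/

theorem exists_eq_vecMulVec_add_vecMulVec_iff {ι K : Type*} [CommRing K] (X : Matrix ι ι K)
    (k : ι) :
    (∃ u v : ι → K, X = vecMulVec u 1 + vecMulVec 1 v) ↔
      ∀ i j, X i j - X i k - X k j + X k k = 0 := by
  constructor
  · rintro ⟨u, v, rfl⟩ i j
    simp only [Matrix.add_apply, vecMulVec_apply, Pi.one_apply]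
    ring
  · intro h
    refine ⟨fun i => X i k, fun j => X k j - X k k, ?_⟩
    ext i j
    simp only [Matrix.add_apply, vecMulVec_apply, Pi.one_apply]
    linear_combination h i j

theorem single_sub_single_dotProduct_mulVec {ι R : Type*} [Fintype ι] [DecidableEq ι]
    [CommRing R] (X : Matrix ι ι R) (i j k : ι) :
    (Pi.single i 1 - Pi.single k 1) ⬝ᵥ X *ᵥ (Pi.single j 1 - Pi.single k 1) =
      X i j - X i k - X k j + X k k := by
  simp only [mulVec_sub, dotProduct_sub, sub_dotProduct, mulVec_single_one, single_dotProduct,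
    one_mul, col_apply]
  ring

def centeringMatrix (ι K : Type*) [Fintype ι] [DecidableEq ι] [Field K] : Matrix ι ι K :=
  1 - (Fintype.card ι : K)⁻¹ • vecMulVec 1 1

section Centering

variable {ι m K : Type*} [Fintype ι] [DecidableEq ι] [Field K]

theorem mul_centeringMatrix (X : Matrix m ι K) :
    X * centeringMatrix ι K = X - (Fintype.card ι : K)⁻¹ • vecMulVec (X *ᵥ 1) 1 := by
  rw [centeringMatrix, Matrix.mul_sub, Matrix.mul_one, Matrix.mul_smul, mul_vecMulVec]

theorem centeringMatrix_mul [Fintype m] (X : Matrix ι m K) :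
    centeringMatrix ι K * X = X - (Fintype.card ι : K)⁻¹ • vecMulVec 1 (1 ᵥ* X) := by
  rw [centeringMatrix, Matrix.sub_mul, Matrix.one_mul, Matrix.smul_mul, vecMulVec_mul]

theorem centeringMatrix_mul_mul_centeringMatrix_of_mulVec_one {X : Matrix ι ι K}
    (hX : X *ᵥ 1 = 0) (hX' : 1 ᵥ* X = 0) :
    centeringMatrix ι K * X * centeringMatrix ι K = X := by
  rw [centeringMatrix_mul, hX', vecMulVec_zero, smul_zero, sub_zero, mul_centeringMatrix, hX,
    zero_vecMulVec, smul_zero, sub_zero]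

variable [CharZero K] [Nonempty ι]

theorem centeringMatrix_mulVec_one : centeringMatrix ι K *ᵥ 1 = 0 := by
  rw [centeringMatrix, sub_mulVec, smul_mulVec, vecMulVec_mulVec, one_dotProduct_one]
  ext
  simp [Fintype.card_ne_zero]

theorem one_vecMul_centeringMatrix : 1 ᵥ* centeringMatrix ι K = 0 := by
  rw [centeringMatrix, vecMul_sub, vecMul_smul, vecMul_vecMulVec, one_dotProduct_one]
  ext
  simp [Fintype.card_ne_zero]

theorem centeringMatrix_mul_self :
    centeringMatrix ι K * centeringMatrix ι K = centeringMatrix ι K := by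
  rw [mul_centeringMatrix, centeringMatrix_mulVec_one, zero_vecMulVec, smul_zero, sub_zero]

theorem centeringMatrix_mul_mul_centeringMatrix_eq_zero_iff (X : Matrix ι ι K) :
    centeringMatrix ι K * X * centeringMatrix ι K = 0 ↔
      ∃ u v : ι → K, X = vecMulVec u 1 + vecMulVec 1 v := by
  constructor
  · intro h
    refine ⟨(Fintype.card ι : K)⁻¹ • (X *ᵥ 1),
      (Fintype.card ι : K)⁻¹ • ((1 ᵥ* X) ᵥ* centeringMatrix ι K), ?_⟩
    rw [centeringMatrix_mul, Matrix.sub_mul, mul_centeringMatrix, Matrix.smul_mul,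
      vecMulVec_mul] at h
    rw [smul_vecMulVec, vecMulVec_smul]
    linear_combination (norm := abel) h
  · rintro ⟨u, v, rfl⟩
    rw [Matrix.mul_add, Matrix.add_mul, mul_vecMulVec, mul_vecMulVec, vecMulVec_mul,
      one_vecMul_centeringMatrix, centeringMatrix_mulVec_one]
    simp

end Centering

section Compression

variable {ι m K : Type*} [Fintype ι] [DecidableEq ι] [Fintype m] [DecidableEq m]

omit [DecidableEq ι] in
theorem conjTranspose_mul_mul_eq_zero_iff [Semiring K] [StarRing K] {Q : Matrix ι m K}
    (hQ : Qᴴ * Q = 1) (X : Matrix ι ι K) :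
    Qᴴ * X * Q = 0 ↔ Q * Qᴴ * X * (Q * Qᴴ) = 0 := by
  constructor
  · intro h
    calc Q * Qᴴ * X * (Q * Qᴴ) = Q * (Qᴴ * X * Q) * Qᴴ := by simp only [Matrix.mul_assoc]
      _ = 0 := by rw [h, Matrix.mul_zero, Matrix.zero_mul]
  · intro h
    calc Qᴴ * X * Q = Qᴴ * Q * Qᴴ * X * (Q * (Qᴴ * Q)) := by
          rw [hQ, Matrix.one_mul, Matrix.mul_one]
      _ = Qᴴ * (Q * Qᴴ * X * (Q * Qᴴ)) * Q := by simp only [Matrix.mul_assoc]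
      _ = 0 := by rw [h, Matrix.mul_zero, Matrix.zero_mul]

variable [Field K] [StarRing K]

theorem mul_conjTranspose_eq_centeringMatrix [CharZero K] {Q : Matrix ι m K}
    (hQ : Qᴴ * Q = 1) (hQ1 : Qᴴ *ᵥ 1 = 0) (hcard : Fintype.card m + 1 = Fintype.card ι) :
    Q * Qᴴ = centeringMatrix ι K := by
  have : Nonempty ι := Fintype.card_pos_iff.mp (by omega)
  have hPQ : centeringMatrix ι K * Q = Q := by
    have : 1 ᵥ* Q = 0 := by simpa [star_mulVec] using congrArg star hQ1
    simp [centeringMatrix_mul, this]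
  have hQP : Qᴴ * centeringMatrix ι K = Qᴴ := by
    rw [mul_centeringMatrix, hQ1, zero_vecMulVec, smul_zero, sub_zero]
  set C := centeringMatrix ι K - Q * Qᴴ
  have hC : IsIdempotentElem C := by
    have hQQ : Q * Qᴴ * (Q * Qᴴ) = Q * Qᴴ := by
      rw [Matrix.mul_assoc, ← Matrix.mul_assoc Qᴴ, hQ, Matrix.one_mul]
    have hPQQ : centeringMatrix ι K * (Q * Qᴴ) = Q * Qᴴ := by rw [← Matrix.mul_assoc, hPQ]
    have hQQP : Q * Qᴴ * centeringMatrix ι K = Q * Qᴴ := by rw [Matrix.mul_assoc, hQP]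
    simp only [IsIdempotentElem, C, Matrix.sub_mul, Matrix.mul_sub, centeringMatrix_mul_self, hQQ,
      hPQQ, hQQP]
    abel
  have htr : C.trace = 0 := by
    rw [trace_sub, trace_mul_comm, hQ, centeringMatrix, trace_sub, trace_smul, trace_one,
      trace_one, trace_vecMulVec, one_dotProduct_one, smul_eq_mul,
      inv_mul_cancel₀ (by simp [Fintype.card_ne_zero]), ← hcard]
    push_cast
    ring
  have hC0 : C = 0 := by
    have he : IsIdempotentElem (Matrix.toLin' C) := hC.map Matrix.toLinAlgEquiv'
    rw [← Matrix.toLin'.map_eq_zero_iff, ← LinearMap.IsIdempotentElem.trace_eq_zero_iff he,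
      Matrix.trace_toLin'_eq, htr]
  exact (sub_eq_zero.mp hC0).symm

end Compression

section Commutator

variable {ι m K : Type*} [Fintype ι] [DecidableEq ι] [Fintype m] [Field K] [StarRing K]

def restrictedCommutator (L : Matrix ι ι K) : Matrix ι ι K :=
  Lᴴ * L - L * Lᴴ - (Fintype.card ι : K)⁻¹ • vecMulVec (Lᴴ *ᵥ 1) (1 ᵥ* L)

theorem selfCommutator_compression_eq {L : Matrix ι ι K} (hL : L *ᵥ 1 = 0) {Q : Matrix ι m K}
    (hQ : Q * Qᴴ = centeringMatrix ι K) :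
    (Qᴴ * L * Q)ᴴ * (Qᴴ * L * Q) - (Qᴴ * L * Q) * (Qᴴ * L * Q)ᴴ =
      Qᴴ * restrictedCommutator L * Q := by
  have hM : (Qᴴ * L * Q)ᴴ = Qᴴ * Lᴴ * Q := by
    simp only [conjTranspose_mul, conjTranspose_conjTranspose, Matrix.mul_assoc]
  have hLPL : Lᴴ * centeringMatrix ι K * L =
      Lᴴ * L - (Fintype.card ι : K)⁻¹ • vecMulVec (Lᴴ *ᵥ 1) (1 ᵥ* L) := by
    rw [mul_centeringMatrix, Matrix.sub_mul, Matrix.smul_mul, vecMulVec_mul]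
  have hLPL' : L * centeringMatrix ι K * Lᴴ = L * Lᴴ := by
    rw [mul_centeringMatrix, hL, zero_vecMulVec, smul_zero, sub_zero]
  calc (Qᴴ * L * Q)ᴴ * (Qᴴ * L * Q) - (Qᴴ * L * Q) * (Qᴴ * L * Q)ᴴ
      = Qᴴ * (Lᴴ * (Q * Qᴴ) * L - L * (Q * Qᴴ) * Lᴴ) * Q := by
        rw [hM]
        simp only [Matrix.mul_sub, Matrix.sub_mul, Matrix.mul_assoc]
    _ = Qᴴ * restrictedCommutator L * Q := by
        rw [hQ, hLPL, hLPL', restrictedCommutator, sub_right_comm]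

end Commutator

section Real

variable {ι m : Type*} [Fintype ι] [DecidableEq ι] [Fintype m] [DecidableEq m]

omit [DecidableEq ι] in
theorem restrictedCommutator_map_ofReal (L : Matrix ι ι ℝ) :
    restrictedCommutator (L.map (fun x => (x : ℂ))) =
      (restrictedCommutator L).map (fun x => (x : ℂ)) := by
  ext i j
  simp [restrictedCommutator, mul_apply, vecMulVec_apply, mulVec, vecMul, dotProduct]

theorem centeringMatrix_map_ofReal :
    (centeringMatrix ι ℝ).map (fun x => (x : ℂ)) = centeringMatrix ι ℂ := by
  ext i j
  by_cases h : i = j <;> simp [centeringMatrix, one_apply, h]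

theorem isNormalM_compression_iff {L : Matrix ι ι ℝ} (hL : L *ᵥ 1 = 0) {Q : Matrix ι m ℂ}
    (hQ : IsRestrictor Q) (hcard : Fintype.card m + 1 = Fintype.card ι) :
    IsNormalM (Qᴴ * L.map (fun x => (x : ℂ)) * Q) ↔
      centeringMatrix ι ℝ * restrictedCommutator L * centeringMatrix ι ℝ = 0 := by
  have hLC : L.map (fun x => (x : ℂ)) *ᵥ 1 = 0 := by
    ext i
    simpa [mulVec, dotProduct] using congrArg (fun x : ℝ => (x : ℂ)) (congrFun hL i)
  have hQQ := mul_conjTranspose_eq_centeringMatrix hQ.1 hQ.2 hcard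
  have hmap (X Y : Matrix ι ι ℝ) : X.map (fun x => (x : ℂ)) * Y.map (fun x => (x : ℂ)) =
      (X * Y).map (fun x => (x : ℂ)) := (Matrix.map_mul (f := Complex.ofRealHom)).symm
  rw [IsNormalM, star_eq_conjTranspose, ← sub_eq_zero, selfCommutator_compression_eq hLC hQQ,
    conjTranspose_mul_mul_eq_zero_iff hQ.1, hQQ, restrictedCommutator_map_ofReal,
    ← centeringMatrix_map_ofReal, hmap, hmap]
  exact (Matrix.map_injective Complex.ofReal_injective).eq_iff' (Matrix.map_zero _ rfl)

omit [DecidableEq ι] in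
theorem mulVec_dotProduct_mulVec (L : Matrix ι ι ℝ) (u v : ι → ℝ) :
    L *ᵥ u ⬝ᵥ L *ᵥ v = u ⬝ᵥ (Lᵀ * L) *ᵥ v := by
  rw [← mulVec_mulVec, dotProduct_mulVec u Lᵀ, vecMul_transpose]

omit [DecidableEq ι] in
theorem dotProduct_restrictedCommutator_mulVec (L : Matrix ι ι ℝ) (u v : ι → ℝ) :
    u ⬝ᵥ restrictedCommutator L *ᵥ v =
      (L *ᵥ u ⬝ᵥ L *ᵥ v - Lᵀ *ᵥ u ⬝ᵥ Lᵀ *ᵥ v) -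
        (Fintype.card ι : ℝ)⁻¹ * ((1 ᵥ* L ⬝ᵥ u) * (1 ᵥ* L ⬝ᵥ v)) := by
  rw [mulVec_dotProduct_mulVec, mulVec_dotProduct_mulVec, transpose_transpose,
    restrictedCommutator, conjTranspose_eq_transpose_of_trivial, mulVec_transpose, sub_mulVec,
    sub_mulVec, smul_mulVec, vecMulVec_mulVec, dotProduct_sub, dotProduct_sub, dotProduct_smul,
    smul_eq_mul, op_smul_eq_smul, dotProduct_smul, smul_eq_mul, dotProduct_comm u (1 ᵥ* L)]
  ring

theorem centeringMatrix_mul_restrictedCommutator_mul_eq_zero_iff (L : Matrix ι ι ℝ) (k : ι) :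
    centeringMatrix ι ℝ * restrictedCommutator L * centeringMatrix ι ℝ = 0 ↔
      ∀ i j, i ≠ k → j ≠ k →
        ((1 ᵥ* L) i - (1 ᵥ* L) k) * ((1 ᵥ* L) j - (1 ᵥ* L) k) =
          (Fintype.card ι : ℝ) *
            ((L *ᵥ (Pi.single i 1 - Pi.single k 1) ⬝ᵥ
                L *ᵥ (Pi.single j 1 - Pi.single k 1)) -
              (Lᵀ *ᵥ (Pi.single i 1 - Pi.single k 1) ⬝ᵥ
                Lᵀ *ᵥ (Pi.single j 1 - Pi.single k 1))) := by
  have : Nonempty ι := ⟨k⟩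
  have hn : (Fintype.card ι : ℝ) ≠ 0 := by simp [Fintype.card_ne_zero]
  rw [centeringMatrix_mul_mul_centeringMatrix_eq_zero_iff,
    exists_eq_vecMulVec_add_vecMulVec_iff _ k]
  refine forall_congr' fun i => forall_congr' fun j => ?_
  by_cases hi : i = k
  · simp [hi]
  by_cases hj : j = k
  · simp [hj]
  simp only [ne_eq, hi, hj, not_false_eq_true, forall_const]
  rw [← single_sub_single_dotProduct_mulVec, dotProduct_restrictedCommutator_mulVec, sub_eq_zero,
    eq_comm, inv_mul_eq_iff_eq_mul₀ hn]
  simp [dotProduct_sub, dotProduct_single]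

variable [Nonempty ι]

theorem isNormalM_iff_one_vecMul_eq_zero {L : Matrix ι ι ℝ} (hL : L *ᵥ 1 = 0)
    (hS : centeringMatrix ι ℝ * restrictedCommutator L * centeringMatrix ι ℝ = 0) :
    IsNormalM L ↔ 1 ᵥ* L = 0 := by
  rw [IsNormalM, star_eq_conjTranspose, conjTranspose_eq_transpose_of_trivial]
  constructor
  · intro hN
    obtain ⟨k⟩ := ‹Nonempty ι›
    have hconst (i : ι) : (1 ᵥ* L) i = (1 ᵥ* L) k := by
      by_cases hi : i = k
      · rw [hi]
      have h := (centeringMatrix_mul_restrictedCommutator_mul_eq_zero_iff L k).mp hS i i hi hi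
      rwa [mulVec_dotProduct_mulVec, mulVec_dotProduct_mulVec, transpose_transpose, hN, sub_self,
        mul_zero, mul_self_eq_zero, sub_eq_zero] at h
    have hsum : 1 ᵥ* L ⬝ᵥ 1 = 0 := by rw [← dotProduct_mulVec, hL, dotProduct_zero]
    have hk : (Fintype.card ι : ℝ) * (1 ᵥ* L) k = 0 := by
      rw [dotProduct, Finset.sum_congr rfl fun i _ => by rw [hconst i, Pi.one_apply, mul_one]]
        at hsum
      simpa using hsum
    ext i
    rw [hconst i, Pi.zero_apply]
    exact (mul_eq_zero.mp hk).resolve_left (by simp [Fintype.card_ne_zero])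
  · intro hι
    have hW : restrictedCommutator L = Lᵀ * L - L * Lᵀ := by
      rw [restrictedCommutator, conjTranspose_eq_transpose_of_trivial, mulVec_transpose, hι,
        zero_vecMulVec, smul_zero, sub_zero]
    have hW1 : (Lᵀ * L - L * Lᵀ) *ᵥ 1 = 0 := by
      rw [sub_mulVec, ← mulVec_mulVec, ← mulVec_mulVec, hL, mulVec_zero, mulVec_transpose, hι,
        mulVec_zero, sub_zero]
    have hW1' : 1 ᵥ* (Lᵀ * L - L * Lᵀ) = 0 := by
      rw [vecMul_sub, ← vecMul_vecMul, ← vecMul_vecMul, hι, vecMul_transpose, hL, zero_vecMul,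
        zero_vecMul, sub_zero]
    rw [hW, centeringMatrix_mul_mul_centeringMatrix_of_mulVec_one hW1 hW1'] at hS
    exact sub_eq_zero.mp hS

end Real

section Laplacian

variable {ι : Type*} [Fintype ι] [DecidableEq ι]

theorem lap_mulVec_one_s14 (A : Matrix ι ι ℝ) : lap A *ᵥ 1 = 0 := by
  ext i
  simp [lap, mulVec, dotProduct, diagonal_apply]

theorem one_vecMul_lap (A : Matrix ι ι ℝ) : 1 ᵥ* lap A = imb A := by
  ext i
  simp [lap, vecMul, dotProduct, diagonal_apply, imb]

omit [DecidableEq ι] in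
theorem bal_iff_imb_eq_zero (A : Matrix ι ι ℝ) : Bal A ↔ imb A = 0 := by
  simp only [Bal, funext_iff, imb, Pi.zero_apply, sub_eq_zero]

end Laplacian

theorem restricted_normal_iff_imbalance_identity_general {n : ℕ}
    (A : Matrix (Fin n) (Fin n) ℝ)
    (Q : Matrix (Fin n) (Fin (n - 1)) ℂ) (hQ : IsRestrictor Q) (k : Fin n) :
    (IsNormalM (Qᴴ * lapC A * Q) ∧ ¬ IsNormalM (lap A)) ↔
      (¬ Bal A ∧ ∀ i j, i ≠ k → j ≠ k →
        (imb A i - imb A k) * (imb A j - imb A k) =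
          (n : ℝ) *
            (((lap A) *ᵥ (Pi.single i 1 - Pi.single k 1) ⬝ᵥ
                (lap A) *ᵥ (Pi.single j 1 - Pi.single k 1)) -
              ((lap A)ᵀ *ᵥ (Pi.single i 1 - Pi.single k 1) ⬝ᵥ
                (lap A)ᵀ *ᵥ (Pi.single j 1 - Pi.single k 1)))) := by
  have : Nonempty (Fin n) := ⟨k⟩
  have hcard : Fintype.card (Fin (n - 1)) + 1 = Fintype.card (Fin n) := by
    simp only [Fintype.card_fin]
    have := k.pos
    omega
  have hidentity := centeringMatrix_mul_restrictedCommutator_mul_eq_zero_iff (lap A) k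
  rw [one_vecMul_lap, Fintype.card_fin] at hidentity
  rw [lapC, isNormalM_compression_iff (lap_mulVec_one_s14 A) hQ hcard, ← hidentity,
    and_comm (a := ¬Bal A)]
  refine and_congr_right fun hS => not_congr ?_
  rw [isNormalM_iff_one_vecMul_eq_zero (lap_mulVec_one_s14 A) hS, one_vecMul_lap, bal_iff_imb_eq_zero]

/-- For any fixed vertex `k`, `Γ` is restricted-normal iff `Γ` is not
balanced and for all `i, j ≠ k`:
`(ι(i) - ι(k))(ι(j) - ι(k)) = n(⟨L(e_i - e_k), L(e_j - e_k)⟩ - ⟨Lᵀ(e_i - e_k), Lᵀ(e_j - e_k)⟩)`. -/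
theorem restricted_normal_iff_imbalance_identity {n : ℕ}
    (A : Matrix (Fin n) (Fin n) ℝ) (hA : IsAdj A)
    (Q : Matrix (Fin n) (Fin (n - 1)) ℂ) (hQ : IsRestrictor Q) (k : Fin n) :
    (IsNormalM (Qᴴ * lapC A * Q) ∧ ¬ IsNormalM (lap A)) ↔
      (¬ Bal A ∧ ∀ i j, i ≠ k → j ≠ k →
        (imb A i - imb A k) * (imb A j - imb A k) =
          (n : ℝ) *
            (((lap A) *ᵥ (Pi.single i 1 - Pi.single k 1) ⬝ᵥ
                (lap A) *ᵥ (Pi.single j 1 - Pi.single k 1)) -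
              ((lap A)ᵀ *ᵥ (Pi.single i 1 - Pi.single k 1) ⬝ᵥ
                (lap A)ᵀ *ᵥ (Pi.single j 1 - Pi.single k 1)))) :=
  restricted_normal_iff_imbalance_identity_general A Q hQ k
end
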